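/- arXiv:2207.01905 — 4 statements merged into one kernel-verified Lean document; each statement's English description precedes it below -/
import Mathlib

section
/- Let R_P be a commutative ring and R_Y an R_P-algebra free of finite rank as an R_P-module. If τ ∈ Hom_{R_P}(R_Y, R_P) generates Hom_{R_P}(R_Y, R_P) as an R_Y-module (i.e. τ is a trace), then for a ∈ R_Y, a·τ = 0 implies a = 0; in particular Hom_{R_P}(R_Y, R_P) ≅ R_Y as R_Y-modules via b ↦ b·τ. -/
/-- Let `R_Y` be an `R_P`-algebra, free of finite rank as an `R_P`-module.  If
`τ : R_Y →ₗ[R_P] R_P` generates `Hom_{R_P}(R_Y, R_P)` as an `R_Y`-module (with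
module structure `(a • ρ)(x) = ρ(a * x)`), i.e. `τ` is a trace, then `a • τ = 0`
implies `a = 0`; in particular `Hom_{R_P}(R_Y, R_P) ≅ R_Y` via `a ↦ a • τ`. -/
theorem trace_generator_faithful
    (R_P R_Y : Type*) [CommRing R_P] [CommRing R_Y] [Algebra R_P R_Y]
    (r : ℕ) (y : Module.Basis (Fin r) R_P R_Y)
    (τ : R_Y →ₗ[R_P] R_P)
    (hτ : ∀ ρ : R_Y →ₗ[R_P] R_P, ∃ a : R_Y, ∀ x, ρ x = τ (a * x)) :
    (∀ a : R_Y, (∀ x, τ (a * x) = 0) → a = 0) ∧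
    (∀ ρ : R_Y →ₗ[R_P] R_P, ∃! a : R_Y, ∀ x, ρ x = τ (a * x)) := by
  haveI : Module.Finite R_P R_Y := Module.Finite.of_basis y
  -- the map a ↦ (x ↦ τ (a * x)), R_P-linear
  let φ : R_Y →ₗ[R_P] (R_Y →ₗ[R_P] R_P) :=
    { toFun := fun a => τ ∘ₗ LinearMap.mulLeft R_P a
      map_add' := by
        intro a b; ext x
        simp [mul_comm, mul_add]
      map_smul' := by
        intro c a; ext x
        simp [smul_mul_assoc] }
  -- the dual space is free with basis the dual basis; identify it with R_Y
  let e : Module.Dual R_P R_Y ≃ₗ[R_P] R_Y := (y.dualBasis.equiv y (Equiv.refl _))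
  let f : R_Y →ₗ[R_P] R_Y := (e : Module.Dual R_P R_Y →ₗ[R_P] R_Y) ∘ₗ φ
  have hφsurj : Function.Surjective φ := by
    intro ρ
    obtain ⟨a, ha⟩ := hτ ρ
    exact ⟨a, by ext x; exact (ha x).symm⟩
  have hfsurj : Function.Surjective f := e.surjective.comp hφsurj
  have hfinj : Function.Injective f :=
    OrzechProperty.injective_of_surjective_endomorphism f hfsurj
  have hφinj : Function.Injective φ := by
    intro a b hab
    apply hfinj
    simp only [f, LinearMap.comp_apply, hab]
  have key : ∀ a : R_Y, (∀ x, τ (a * x) = 0) → a = 0 := by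
    intro a ha
    have : φ a = 0 := by ext x; simpa [φ] using ha x
    exact hφinj (show φ a = φ 0 by simpa using this)
  refine ⟨key, fun ρ => ?_⟩
  obtain ⟨a, ha⟩ := hτ ρ
  refine ⟨a, ha, fun b hb => ?_⟩
  have : b - a = 0 := by
    apply key
    intro x
    have : τ (b * x) = τ (a * x) := by rw [← ha x, ← hb x]
    simp [sub_mul, map_sub, this]
  exact sub_eq_zero.mp this
end

section
/- Let R_P be a commutative ring and R_Y an R_P-algebra free of rank r as an R_P-module with basis y_0,...,y_{r-1}. If τ ∈ Hom_{R_P}(R_Y, R_P) is a trace (generates the dual as an R_Y-module), then there exist ŷ_0,...,ŷ_{r-1} ∈ R_Y with τ(ŷ_i·y_j) = δ_{ij} for all i,j, and moreover the standard trace satisfies τ_{R_Y/R_P} = (Σ_i ŷ_i·y_i)·τ. -/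
/-- Let `R_Y` be an `R_P`-algebra, free of rank `r` with basis `y`.  If
`τ : R_Y →ₗ[R_P] R_P` is a trace (generates the dual as an `R_Y`-module), then
there is a dual basis `ŷ` with `τ (ŷ i * y j) = δ_{ij}`, and the standard trace
`z ↦ ∑ i, y*_i (y_i * z)` equals `z ↦ τ ((∑ i, ŷ i * y i) * z)`. -/
theorem trace_dual_basis_and_standard_trace
    (R_P R_Y : Type*) [CommRing R_P] [CommRing R_Y] [Algebra R_P R_Y]
    (r : ℕ) (y : Module.Basis (Fin r) R_P R_Y)
    (τ : R_Y →ₗ[R_P] R_P)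
    (hτ : ∀ ρ : R_Y →ₗ[R_P] R_P, ∃ a : R_Y, ∀ x, ρ x = τ (a * x)) :
    ∃ yhat : Fin r → R_Y,
      (∀ i j, τ (yhat i * y j) = if i = j then 1 else 0) ∧
      (∀ z : R_Y, ∑ i, y.coord i (y i * z) = τ ((∑ i, yhat i * y i) * z)) := by
  choose yhat hyhat using fun i => hτ (y.coord i)
  refine ⟨yhat, fun i j => ?_, fun z => ?_⟩
  · rw [← hyhat i (y j), y.coord_apply, y.repr_self, Finsupp.single_apply, eq_comm]
    simp [eq_comm]
  · rw [Finset.sum_mul, map_sum]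
    exact Finset.sum_congr rfl fun i _ => by rw [hyhat i (y i * z), mul_assoc]
end

section
/- Let R_P be a commutative ring, R_Y an R_P-algebra, μ: R_Y ⊗_{R_P} R_Y → R_Y the multiplication map. There is a well-defined R_Y-linear map φ: Ann_{R_Y^e}(Ker μ) → Hom_{R_Y}(Hom_{R_P}(R_Y, R_P), R_Y) sending Σ a_i ⊗ b_i to the map ρ ↦ Σ ρ(a_i)·b_i; in particular for s ∈ R_Y and ρ ∈ Hom_{R_P}(R_Y,R_P), φ(z)(s·ρ) = s·φ(z)(ρ). -/
/-!
Since `μ (s ⊗ 1 - 1 ⊗ s) = 0`, an element `z` of `Ann(ker μ)` satisfies `(s ⊗ 1) z = z (1 ⊗ s)`.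
Applying the slant map `x ⊗ y ↦ ρ(x) • y` turns the left side into `φ(z)(s • ρ)` and the right
side into `φ(z)(ρ) * s`.
-/

open scoped TensorProduct

namespace TensorProduct

variable {R A B : Type*} [CommSemiring R] [Semiring A] [Algebra R A] [Semiring B] [Algebra R B]

def slantLeft (ρ : A →ₗ[R] R) : A ⊗[R] B →ₗ[R] B :=
  (TensorProduct.lid R B).toLinearMap ∘ₗ ρ.rTensor B

@[simp]
theorem slantLeft_tmul (ρ : A →ₗ[R] R) (x : A) (y : B) :
    slantLeft ρ (x ⊗ₜ[R] y) = ρ x • y := by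
  simp [slantLeft]

theorem slantLeft_tmul_one_mul (ρ : A →ₗ[R] R) (a : A) (z : A ⊗[R] B) :
    slantLeft ρ ((a ⊗ₜ[R] (1 : B)) * z) = slantLeft (ρ ∘ₗ LinearMap.mulLeft R a) z := by
  induction z using TensorProduct.induction_on with
  | zero => simp
  | tmul x y => simp [Algebra.TensorProduct.tmul_mul_tmul]
  | add z w hz hw => simp [mul_add, hz, hw]

theorem slantLeft_mul_one_tmul (ρ : A →ₗ[R] R) (z : A ⊗[R] B) (b : B) :
    slantLeft ρ (z * ((1 : A) ⊗ₜ[R] b)) = slantLeft ρ z * b := by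
  induction z using TensorProduct.induction_on with
  | zero => simp
  | tmul x y => simp [Algebra.TensorProduct.tmul_mul_tmul]
  | add z w hz hw => simp [add_mul, hz, hw]

end TensorProduct

/-- The map `φ : Ann(ker μ) → Hom_{R_Y}(Hom_{R_P}(R_Y, R_P), R_Y)` sending
`∑ a i ⊗ b i` to `ρ ↦ ∑ ρ (a i) • b i` is well-defined and `R_Y`-linear: for
`s ∈ R_Y` and `ρ ∈ Hom_{R_P}(R_Y, R_P)` (with `(s • ρ)(x) = ρ(s * x)`) one has
`φ(z)(s • ρ) = s * φ(z)(ρ)`. -/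
theorem annihilator_kernel_phi_linear
    (R_P R_Y : Type*) [CommRing R_P] [CommRing R_Y] [Algebra R_P R_Y]
    (n : ℕ) (a b : Fin n → R_Y)
    (hz : ∀ w : R_Y ⊗[R_P] R_Y, LinearMap.mul' R_P R_Y w = 0 →
      (∑ i, a i ⊗ₜ[R_P] b i) * w = 0)
    (s : R_Y) (ρ : R_Y →ₗ[R_P] R_P) :
    ∑ i, ρ (s * a i) • b i = s * ∑ i, ρ (a i) • b i := by
  set z := ∑ i, a i ⊗ₜ[R_P] b i
  have hker : LinearMap.mul' R_P R_Y (s ⊗ₜ[R_P] 1 - 1 ⊗ₜ[R_P] s) = 0 := by simp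
  have hcomm : s ⊗ₜ[R_P] 1 * z = z * 1 ⊗ₜ[R_P] s := by
    rw [mul_comm, ← sub_eq_zero, ← mul_sub]
    exact hz _ hker
  have hslant := congrArg (TensorProduct.slantLeft ρ) hcomm
  rw [TensorProduct.slantLeft_tmul_one_mul, TensorProduct.slantLeft_mul_one_tmul,
    mul_comm _ s] at hslant
  simpa [z] using hslant
end

section
/- With the setup of the monic extension R_Y = k[x][Y]/(f), f monic of degree r, and τ the functional with τ(y^i) = δ_{i,r-1}: the standard trace Tr of R_Y/k[x] (trace of the multiplication endomorphism) satisfies Tr = f_Y(x,y)·τ as elements of Hom_{k[x]}(R_Y, k[x]), where f_Y = ∂f/∂Y; equivalently Tr(z) = τ(f_Y(x,y)·z) for all z ∈ R_Y. -/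
open Polynomial

private lemma double_sum_smul {M : Type*} [AddCommMonoid M] (g : ℕ → M) (r : ℕ) :
    ∑ i ∈ Finset.range r, ∑ m ∈ Finset.range (r - i), g (i + m)
      = ∑ n ∈ Finset.range r, (n + 1) • g n := by
  induction r with
  | zero => simp
  | succ r ih =>
    have h1 : ∀ i ∈ Finset.range (r + 1), ∑ m ∈ Finset.range (r + 1 - i), g (i + m)
        = (∑ m ∈ Finset.range (r - i), g (i + m)) + g r := by
      intro i hi
      rw [Finset.mem_range] at hi
      have h2 : r + 1 - i = (r - i) + 1 := by omega
      rw [h2, Finset.sum_range_succ]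
      congr 2
      omega
    rw [Finset.sum_congr rfl h1, Finset.sum_add_distrib,
      Finset.sum_range_succ (f := fun i => ∑ m ∈ Finset.range (r - i), g (i + m))]
    simp only [Nat.sub_self, Finset.range_zero, Finset.sum_empty, add_zero]
    rw [ih, Finset.sum_const, Finset.card_range, Finset.sum_range_succ]

private theorem aux_trace {R : Type*} [CommRing R] (r : ℕ) (hr : 0 < r)
    (f : R[X]) (hf : f.Monic) (hdeg : f.natDegree = r)
    (τ : AdjoinRoot f →ₗ[R] R)
    (hτ : ∀ i < r, τ (AdjoinRoot.root f ^ i) = if i = r - 1 then 1 else 0)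
    (z : AdjoinRoot f) :
    Algebra.trace R (AdjoinRoot f) z
      = τ (AdjoinRoot.mk f (Polynomial.derivative f) * z) := by
  classical
  subst hdeg
  set d := f.natDegree with hd
  -- the "dual basis" polynomials
  set P : ℕ → R[X] := fun i => ∑ m ∈ Finset.range (d - i), C (f.coeff (i + 1 + m)) * X ^ m
    with hP
  have htop : f.coeff d = 1 := hf.coeff_natDegree
  -- polynomial recurrences
  have polyrel : ∀ j, X * P (j + 1) + C (f.coeff (j + 1)) = P j := by
    intro j
    rcases Nat.eq_zero_or_pos (d - j) with h | h
    · have h1 : d - (j + 1) = 0 := by omega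
      have h2 : f.coeff (j + 1) = 0 := coeff_eq_zero_of_natDegree_lt (by omega)
      simp [hP, h, h1, h2]
    · obtain ⟨s, hs⟩ : ∃ s, d - j = s + 1 := ⟨d - j - 1, by omega⟩
      have h1 : d - (j + 1) = s := by omega
      simp only [hP, h1, hs, Finset.sum_range_succ']
      rw [Finset.mul_sum]
      congr 1
      · apply Finset.sum_congr rfl
        intro m _
        have h3 : j + 1 + (m + 1) = j + 1 + 1 + m := by omega
        rw [h3]; ring
      · simp
  have polyrel0 : X * P 0 + C (f.coeff 0) = f := by
    conv_rhs => rw [f.as_sum_range]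
    rw [Finset.sum_range_succ']
    simp only [hP, Nat.sub_zero, Finset.mul_sum]
    congr 1
    · apply Finset.sum_congr rfl
      intro m _
      rw [← C_mul_X_pow_eq_monomial]
      have h3 : 0 + 1 + m = m + 1 := by omega
      rw [h3]; ring
  -- quotient-level recurrences
  have rel1 : ∀ j, AdjoinRoot.root f * AdjoinRoot.mk f (P (j + 1))
      = AdjoinRoot.mk f (P j) - algebraMap R (AdjoinRoot f) (f.coeff (j + 1)) := by
    intro j
    have h := congrArg (AdjoinRoot.mk f) (polyrel j)
    rw [map_add, map_mul, AdjoinRoot.mk_X, AdjoinRoot.mk_C] at h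
    rw [eq_sub_iff_add_eq, ← h, AdjoinRoot.algebraMap_eq]
  have rel0 : AdjoinRoot.root f * AdjoinRoot.mk f (P 0)
      = -(algebraMap R (AdjoinRoot f) (f.coeff 0)) := by
    have h := congrArg (AdjoinRoot.mk f) polyrel0
    rw [map_add, map_mul, AdjoinRoot.mk_X, AdjoinRoot.mk_C, AdjoinRoot.mk_self] at h
    rw [eq_neg_iff_add_eq_zero, ← h, AdjoinRoot.algebraMap_eq]
  -- mk of P i as a sum of smul of powers of root
  have hmkP : ∀ i, AdjoinRoot.mk f (P i)
      = ∑ m ∈ Finset.range (d - i), f.coeff (i + 1 + m) • AdjoinRoot.root f ^ m := by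
    intro i
    rw [hP, map_sum]
    apply Finset.sum_congr rfl
    intro m _
    rw [map_mul, map_pow, AdjoinRoot.mk_X, AdjoinRoot.mk_C, Algebra.smul_def,
      AdjoinRoot.algebraMap_eq]
  -- key duality computation
  have key : ∀ t, t < d → ∀ i, i < d →
      τ (AdjoinRoot.root f ^ t * AdjoinRoot.mk f (P i)) = if t = i then 1 else 0 := by
    intro t
    induction t with
    | zero =>
      intro _ i hi
      rw [pow_zero, one_mul, hmkP, map_sum]
      have h1 : ∀ m ∈ Finset.range (d - i),
          τ (f.coeff (i + 1 + m) • AdjoinRoot.root f ^ m)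
            = if m = d - 1 then f.coeff (i + 1 + m) else 0 := by
        intro m hm
        rw [Finset.mem_range] at hm
        rw [map_smul, smul_eq_mul, hτ m (by omega), mul_ite, mul_one, mul_zero]
      rw [Finset.sum_congr rfl h1, Finset.sum_ite_eq' (Finset.range (d - i))]
      by_cases hi0 : i = 0
      · subst hi0
        rw [if_pos (by rw [Finset.mem_range]; omega), if_pos rfl]
        have : 0 + 1 + (d - 1) = d := by omega
        rw [this, htop]
      · rw [if_neg (by rw [Finset.mem_range]; omega), if_neg (by omega)]
    | succ t ih =>
      intro ht i hi
      have ht' : t < d := by omega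
      have htr : τ (AdjoinRoot.root f ^ t) = 0 := by
        rw [hτ t ht', if_neg (by omega)]
      cases i with
      | zero =>
        rw [pow_succ, mul_assoc, rel0]
        have h2 : AdjoinRoot.root f ^ t * -(algebraMap R (AdjoinRoot f) (f.coeff 0))
            = (-(f.coeff 0)) • AdjoinRoot.root f ^ t := by
          rw [Algebra.smul_def, map_neg, neg_mul, mul_neg, mul_comm]
        rw [h2, map_smul, smul_eq_mul, htr, mul_zero, if_neg (by omega)]
      | succ j =>
        rw [pow_succ, mul_assoc, rel1 j, mul_sub, map_sub]
        have h2 : AdjoinRoot.root f ^ t * algebraMap R (AdjoinRoot f) (f.coeff (j + 1))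
            = f.coeff (j + 1) • AdjoinRoot.root f ^ t := by
          rw [Algebra.smul_def, mul_comm]
        rw [h2, map_smul, smul_eq_mul, htr, mul_zero, sub_zero, ih ht' j (by omega)]
        simp [Nat.add_right_cancel_iff]
  -- the power basis
  set pb := AdjoinRoot.powerBasis' hf with hpb
  have hdim : pb.dim = d := rfl
  have hgen : pb.gen = AdjoinRoot.root f := rfl
  have coord : ∀ (i : Fin pb.dim) (w : AdjoinRoot f),
      pb.basis.repr w i = τ (AdjoinRoot.mk f (P (i : ℕ)) * w) := by
    intro i w
    have hext : pb.basis.coord i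
        = τ.comp (LinearMap.mulLeft R (AdjoinRoot.mk f (P (i : ℕ)))) := by
      apply pb.basis.ext
      intro t
      rw [Module.Basis.coord_apply, Module.Basis.repr_self, Finsupp.single_apply,
        LinearMap.comp_apply, LinearMap.mulLeft_apply, pb.basis_eq_pow, hgen,
        mul_comm, key (t : ℕ) (hdim ▸ t.isLt) (i : ℕ) (hdim ▸ i.isLt)]
      simp [Fin.ext_iff]
    have := congrArg (fun (L : AdjoinRoot f →ₗ[R] R) => L w) hext
    simpa using this
  -- sum of P i * X^i equals derivative
  have sumP : ∑ i ∈ Finset.range d, P i * X ^ i = Polynomial.derivative f := by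
    have h1 : ∑ i ∈ Finset.range d, P i * X ^ i
        = ∑ i ∈ Finset.range d, ∑ m ∈ Finset.range (d - i),
            (C (f.coeff ((i + m) + 1)) * X ^ (i + m)) := by
      apply Finset.sum_congr rfl
      intro i _
      rw [hP, Finset.sum_mul]
      apply Finset.sum_congr rfl
      intro m _
      have h2 : i + 1 + m = i + m + 1 := by omega
      rw [h2, pow_add]; ring
    refine h1.trans ((double_sum_smul (fun n => C (f.coeff (n + 1)) * X ^ n) d).trans ?_)
    conv_rhs => rw [f.as_sum_range]
    rw [derivative_sum, Finset.sum_range_succ']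
    simp only [derivative_monomial]
    rw [show ((0:ℕ) - 1) = 0 by rfl]
    simp only [Nat.cast_zero, mul_zero, monomial_zero_right, add_zero]
    apply Finset.sum_congr rfl
    intro n _
    rw [Nat.add_sub_cancel, C_mul_X_pow_eq_monomial, smul_monomial, nsmul_eq_mul, mul_comm]
  -- assemble
  rw [Algebra.trace_eq_matrix_trace pb.basis z]
  have hdiag : ∀ i : Fin pb.dim, (Algebra.leftMulMatrix pb.basis z).diag i
      = τ (AdjoinRoot.mk f (P (i : ℕ) * X ^ (i : ℕ)) * z) := by
    intro i
    rw [Matrix.diag_apply, Algebra.leftMulMatrix_eq_repr_mul, coord i]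
    congr 1
    rw [map_mul, map_pow, AdjoinRoot.mk_X, pb.basis_eq_pow, hgen]
    ring
  calc Matrix.trace (Algebra.leftMulMatrix pb.basis z)
      = ∑ i : Fin pb.dim, (Algebra.leftMulMatrix pb.basis z).diag i := rfl
    _ = ∑ i : Fin pb.dim, τ (AdjoinRoot.mk f (P (i : ℕ) * X ^ (i : ℕ)) * z) :=
        Finset.sum_congr rfl (fun i _ => hdiag i)
    _ = τ ((∑ i : Fin pb.dim, AdjoinRoot.mk f (P (i : ℕ) * X ^ (i : ℕ))) * z) := by
        rw [Finset.sum_mul, map_sum]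
    _ = τ (AdjoinRoot.mk f (∑ i ∈ Finset.range d, P i * X ^ i) * z) := by
        rw [map_sum]
        exact congrArg τ (congrArg (· * z)
          (Fin.sum_univ_eq_sum_range (fun i => AdjoinRoot.mk f (P i * X ^ i)) pb.dim))
    _ = τ (AdjoinRoot.mk f (Polynomial.derivative f) * z) := by rw [sumP]

/-- Let `R_P = k[x]`, `f ∈ R_P[Y]` monic of degree `r` and separable, and
`R_Y = R_P[Y]/(f)` with `y` the class of `Y`.  Let `τ : R_Y →ₗ[R_P] R_P` be
the functional with `τ (y^i) = δ_{i, r-1}`.  Then the standard trace of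
`R_Y / R_P` satisfies `Tr z = τ (f_Y(x, y) * z)` for all `z`, where `f_Y` is
the partial derivative of `f` with respect to `Y`. -/
theorem standard_trace_eq_derivative_mul_tau
    {k : Type*} [Field k] (r : ℕ) (hr : 0 < r)
    (f : Polynomial (Polynomial k)) (hf : f.Monic) (hdeg : f.natDegree = r)
    (hsep : f.Separable)
    (τ : (Polynomial (Polynomial k) ⧸ Ideal.span {f}) →ₗ[Polynomial k] Polynomial k)
    (hτ : ∀ i < r, τ ((Ideal.Quotient.mk (Ideal.span {f}) X) ^ i)
        = if i = r - 1 then 1 else 0)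
    (z : Polynomial (Polynomial k) ⧸ Ideal.span {f}) :
    Algebra.trace (Polynomial k) (Polynomial (Polynomial k) ⧸ Ideal.span {f}) z
      = τ (Ideal.Quotient.mk (Ideal.span {f}) (Polynomial.derivative f) * z) := by
  exact aux_trace r hr f hf hdeg τ hτ z
end
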